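/- For every 0 ≤ i ≤ n, the entropy production satisfies the identity σ_i = γ(|r_1|²/T_1 + |r_n|²/T_n − 2d) + L R_i (as an identity of smooth functions on X). -/

import Mathlib

open scoped BigOperators
open MeasureTheory

noncomputable section

namespace EP

/-- `d`-dimensional vectors. -/
abbrev Vec (d : ℕ) := Fin d → ℝ

/-- The phase space `X = (ℝ^d)^n × (ℝ^d)^n × (ℝ^d × ℝ^d)`,
coordinates `x = (p, q, (r₁, rₙ))`. -/
abbrev Phase (d n : ℕ) := (Fin n → Vec d) × (Fin n → Vec d) × (Vec d × Vec d)

/-- Euclidean dot product on `ℝ^d`. -/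
def dotp {d : ℕ} (a b : Vec d) : ℝ := ∑ j, a j * b j

/-- 1-based access to an `n`-tuple of vectors (defaults to `0` out of range;
all uses below are in range). -/
def nth {d n : ℕ} (v : Fin n → Vec d) (i : ℕ) : Vec d :=
  if h : 1 ≤ i ∧ i ≤ n then v ⟨i - 1, by omega⟩ else 0

/-- The coordinate direction `j` of the `i`-th (1-based) vector in `(ℝ^d)^n`. -/
def basisQ (d n : ℕ) (i : ℕ) (j : Fin d) : Fin n → Vec d :=
  if h : 1 ≤ i ∧ i ≤ n then Pi.single (⟨i - 1, by omega⟩ : Fin n) (Pi.single j 1) else 0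

/-- Coordinate direction in `X`: component `j` of `p_i`. -/
def eP (d n : ℕ) (i : ℕ) (j : Fin d) : Phase d n := (basisQ d n i j, 0, 0, 0)
/-- Coordinate direction in `X`: component `j` of `q_i`. -/
def eQ (d n : ℕ) (i : ℕ) (j : Fin d) : Phase d n := (0, basisQ d n i j, 0, 0)
/-- Coordinate direction in `X`: component `j` of `r₁`. -/
def eR1 (d n : ℕ) (j : Fin d) : Phase d n := (0, 0, Pi.single j 1, 0)
/-- Coordinate direction in `X`: component `j` of `rₙ`. -/
def eRn (d n : ℕ) (j : Fin d) : Phase d n := (0, 0, 0, Pi.single j 1)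

/-- First-order partial derivative of `f` in direction `v` at `x`. -/
def pd {d n : ℕ} (f : Phase d n → ℝ) (v x : Phase d n) : ℝ := fderiv ℝ f x v

/-- Second-order partial derivative of `f` in direction `v` at `x`. -/
def pd2 {d n : ℕ} (f : Phase d n → ℝ) (v x : Phase d n) : ℝ :=
  fderiv ℝ (fun y => fderiv ℝ f y v) x v

/-- The potential `V(q) = Σ_{i=1}^n U¹(q_i) + Σ_{i=1}^{n-1} U²(q_i - q_{i+1})`. -/
def Vpot (d n : ℕ) (U1 U2 : Vec d → ℝ) (q : Fin n → Vec d) : ℝ :=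
  (∑ i ∈ Finset.Icc 1 n, U1 (nth q i)) +
  (∑ i ∈ Finset.Icc 1 (n - 1), U2 (nth q i - nth q (i + 1)))

/-- `L₀ f = γ(T₁ Δ_{r₁} f + Tₙ Δ_{rₙ} f - r₁·∇_{r₁} f - rₙ·∇_{rₙ} f)`. -/
def gen0 (d n : ℕ) (ga T1 Tn : ℝ) (f : Phase d n → ℝ) (x : Phase d n) : ℝ :=
  ga * (T1 * ∑ j, pd2 f (eR1 d n j) x + Tn * ∑ j, pd2 f (eRn d n j) x
      - ∑ j, x.2.2.1 j * pd f (eR1 d n j) x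
      - ∑ j, x.2.2.2 j * pd f (eRn d n j) x)

/-- The first-order part
`L₁ f = λ(p₁·∇_{r₁} f + pₙ·∇_{rₙ} f - r₁·∇_{p₁} f - rₙ·∇_{pₙ} f)
  + (Σ p_i·∇_{q_i} f - Σ ∇_{q_i}V·∇_{p_i} f)`. -/
def gen1 (d n : ℕ) (U1 U2 : Vec d → ℝ) (lam : ℝ) (f : Phase d n → ℝ) (x : Phase d n) : ℝ :=
  lam * ((∑ j, nth x.1 1 j * pd f (eR1 d n j) x)
       + (∑ j, nth x.1 n j * pd f (eRn d n j) x)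
       - (∑ j, x.2.2.1 j * pd f (eP d n 1 j) x)
       - (∑ j, x.2.2.2 j * pd f (eP d n n j) x))
  + ((∑ i ∈ Finset.Icc 1 n, ∑ j, nth x.1 i j * pd f (eQ d n i j) x)
   - (∑ i ∈ Finset.Icc 1 n, ∑ j,
       fderiv ℝ (Vpot d n U1 U2) x.2.1 (basisQ d n i j) * pd f (eP d n i j) x))

/-- The generator `L = L₀ + L₁`. -/
def gen (d n : ℕ) (U1 U2 : Vec d → ℝ) (ga lam T1 Tn : ℝ)
    (f : Phase d n → ℝ) (x : Phase d n) : ℝ :=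
  gen0 d n ga T1 Tn f x + gen1 d n U1 U2 lam f x

/-- The formal adjoint `Lᵀ`. -/
def genT (d n : ℕ) (U1 U2 : Vec d → ℝ) (ga lam T1 Tn : ℝ)
    (g : Phase d n → ℝ) (x : Phase d n) : ℝ :=
  ga * (T1 * ∑ j, pd2 g (eR1 d n j) x + Tn * ∑ j, pd2 g (eRn d n j) x
      + ∑ j, x.2.2.1 j * pd g (eR1 d n j) x
      + ∑ j, x.2.2.2 j * pd g (eRn d n j) x
      + 2 * (d : ℝ) * g x)
  - lam * ((∑ j, nth x.1 1 j * pd g (eR1 d n j) x)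
         + (∑ j, nth x.1 n j * pd g (eRn d n j) x)
         - (∑ j, x.2.2.1 j * pd g (eP d n 1 j) x)
         - (∑ j, x.2.2.2 j * pd g (eP d n n j) x))
  - ((∑ i ∈ Finset.Icc 1 n, ∑ j, nth x.1 i j * pd g (eQ d n i j) x)
   - (∑ i ∈ Finset.Icc 1 n, ∑ j,
       fderiv ℝ (Vpot d n U1 U2) x.2.1 (basisQ d n i j) * pd g (eP d n i j) x))

/-- The heat flows `Φ_i`, `0 ≤ i ≤ n`. -/
def flow (d n : ℕ) (U2 : Vec d → ℝ) (lam : ℝ) (i : ℕ) (x : Phase d n) : ℝ :=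
  if i = 0 then - lam * dotp x.2.2.1 (nth x.1 1)
  else if i = n then lam * dotp x.2.2.2 (nth x.1 n)
  else ∑ j, ((nth x.1 i j + nth x.1 (i + 1) j) / 2) *
        fderiv ℝ U2 (nth x.2.1 i - nth x.2.1 (i + 1)) (Pi.single j 1)

/-- The entropy productions `σ_i = (1/Tₙ - 1/T₁) Φ_i`. -/
def sigmaF (d n : ℕ) (U2 : Vec d → ℝ) (lam T1 Tn : ℝ) (i : ℕ) (x : Phase d n) : ℝ :=
  (1 / Tn - 1 / T1) * flow d n U2 lam i x

/-- The local energies `H_i`, `1 ≤ i ≤ n`. -/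
def locH (d n : ℕ) (U1 U2 : Vec d → ℝ) (i : ℕ) (x : Phase d n) : ℝ :=
  dotp (nth x.1 i) (nth x.1 i) / 2 + U1 (nth x.2.1 i)
  + (if 2 ≤ i then U2 (nth x.2.1 (i - 1) - nth x.2.1 i) else 0) / 2
  + (if i < n then U2 (nth x.2.1 i - nth x.2.1 (i + 1)) else 0) / 2

/-- `R_i = (1/T₁)(|r₁|²/2 + Σ_{k=1}^i H_k) + (1/Tₙ)(Σ_{k=i+1}^n H_k + |rₙ|²/2)`. -/
def Rfun (d n : ℕ) (U1 U2 : Vec d → ℝ) (T1 Tn : ℝ) (i : ℕ) (x : Phase d n) : ℝ :=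
  (1 / T1) * (dotp x.2.2.1 x.2.2.1 / 2 + ∑ k ∈ Finset.Icc 1 i, locH d n U1 U2 k x)
  + (1 / Tn) * ((∑ k ∈ Finset.Icc (i + 1) n, locH d n U1 U2 k x) + dotp x.2.2.2 x.2.2.2 / 2)

/-- The total energy `G(p,q,r) = |r₁|²/2 + |rₙ|²/2 + Σ|p_i|²/2 + V(q)`. -/
def Gfun (d n : ℕ) (U1 U2 : Vec d → ℝ) (x : Phase d n) : ℝ :=
  dotp x.2.2.1 x.2.2.1 / 2 + dotp x.2.2.2 x.2.2.2 / 2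
  + (∑ i : Fin n, dotp (x.1 i) (x.1 i) / 2) + Vpot d n U1 U2 x.2.1

/-- The chain energy `H_S(p,q) = Σ|p_i|²/2 + V(q)`. -/
def HS (d n : ℕ) (U1 U2 : Vec d → ℝ) (x : Phase d n) : ℝ :=
  (∑ i : Fin n, dotp (x.1 i) (x.1 i) / 2) + Vpot d n U1 U2 x.2.1

/-- Momentum reversal `(Jf)(p,q,r) = f(-p,q,r)`. -/
def Jop {d n : ℕ} (f : Phase d n → ℝ) : Phase d n → ℝ := fun x => f (-x.1, x.2)

/-- `L̃_α f = L f + 2αγ (r₁·∇_{r₁} f + rₙ·∇_{rₙ} f)`. -/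
def genTilde (d n : ℕ) (U1 U2 : Vec d → ℝ) (ga lam T1 Tn al : ℝ)
    (f : Phase d n → ℝ) (x : Phase d n) : ℝ :=
  gen d n U1 U2 ga lam T1 Tn f x
  + 2 * al * ga * ((∑ j, x.2.2.1 j * pd f (eR1 d n j) x)
                 + (∑ j, x.2.2.2 j * pd f (eRn d n j) x))

/-- `L̄_α f = L̃_α f - ((α-α²)γ(|r₁|²/T₁ + |rₙ|²/Tₙ) - 2dαγ) f`. -/
def genBar (d n : ℕ) (U1 U2 : Vec d → ℝ) (ga lam T1 Tn al : ℝ)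
    (f : Phase d n → ℝ) (x : Phase d n) : ℝ :=
  genTilde d n U1 U2 ga lam T1 Tn al f x
  - ((al - al ^ 2) * ga * (dotp x.2.2.1 x.2.2.1 / T1 + dotp x.2.2.2 x.2.2.2 / Tn)
     - 2 * (d : ℝ) * al * ga) * f x

section Infra
variable {d n : ℕ}

lemma dotp_single (a : Vec d) (j : Fin d) : dotp a (Pi.single j 1) = a j := by
  unfold dotp
  rw [Finset.sum_eq_single j]
  · simp
  · intro k _ hk; simp [Pi.single_eq_of_ne hk]
  · simp

@[simp] lemma dotp_zero_right (a : Vec d) : dotp a 0 = 0 := by simp [dotp]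

/-- `|v|²/2`. -/
def sq2 (v : Vec d) : ℝ := dotp v v / 2

/-- gradient of `sq2`. -/
def prj {d : ℕ} (j : Fin d) : Vec d →L[ℝ] ℝ := ContinuousLinearMap.proj j

def gradSq (v : Vec d) : Vec d →L[ℝ] ℝ := ∑ j, v j • prj j

lemma gradSq_apply (v w : Vec d) : gradSq v w = dotp v w := by
  simp [gradSq, dotp, prj, ContinuousLinearMap.sum_apply]

lemma hasFDerivAt_sq2 (v : Vec d) : HasFDerivAt (sq2 (d := d)) (gradSq v) v := by
  have h : ∀ j : Fin d, HasFDerivAt (fun w : Vec d => w j * w j)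
      (v j • prj j + v j • prj j) v := by
    intro j
    exact (prj j).hasFDerivAt.mul (prj j).hasFDerivAt
  have hs := (HasFDerivAt.fun_sum (fun j (_ : j ∈ Finset.univ) => h j)).const_mul (1/2 : ℝ)
  have : sq2 (d := d) = fun w : Vec d => (1/2 : ℝ) * ∑ j, w j * w j := by
    funext w; simp [sq2, dotp]; ring
  rw [this]
  convert hs using 1
  case e'_12 =>
    ext w
    simp [gradSq, prj, Finset.sum_add_distrib, ContinuousLinearMap.sum_apply]
    ring
  all_goals rfl

end Infra
section Coords
variable {d n : ℕ}

/-- coordinate CLMs on phase space -/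
def Tp {d n : ℕ} (k : Fin n) : Phase d n →L[ℝ] Vec d :=
  (ContinuousLinearMap.proj k).comp (ContinuousLinearMap.fst ℝ _ _)
def Tq {d n : ℕ} (k : Fin n) : Phase d n →L[ℝ] Vec d :=
  (ContinuousLinearMap.proj k).comp
    ((ContinuousLinearMap.fst ℝ _ _).comp (ContinuousLinearMap.snd ℝ _ _))
def Ta (d n : ℕ) : Phase d n →L[ℝ] Vec d :=
  (ContinuousLinearMap.fst ℝ _ _).comp
    ((ContinuousLinearMap.snd ℝ _ _).comp (ContinuousLinearMap.snd ℝ _ _))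
def Tb (d n : ℕ) : Phase d n →L[ℝ] Vec d :=
  (ContinuousLinearMap.snd ℝ _ _).comp
    ((ContinuousLinearMap.snd ℝ _ _).comp (ContinuousLinearMap.snd ℝ _ _))

@[simp] lemma Tp_apply (k : Fin n) (x : Phase d n) : Tp k x = x.1 k := rfl
@[simp] lemma Tq_apply (k : Fin n) (x : Phase d n) : Tq k x = x.2.1 k := rfl
@[simp] lemma Ta_apply (x : Phase d n) : Ta d n x = x.2.2.1 := rfl
@[simp] lemma Tb_apply (x : Phase d n) : Tb d n x = x.2.2.2 := rfl

lemma nth_eq (v : Fin n → Vec d) (k : ℕ) (h1 : 1 ≤ k) (h2 : k ≤ n) :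
    nth v k = v ⟨k - 1, by omega⟩ := dif_pos ⟨h1, h2⟩

lemma basisQ_eval (m : ℕ) (j : Fin d) (h1 : 1 ≤ m) (h2 : m ≤ n) :
    basisQ d n m j = Pi.single (⟨m - 1, by omega⟩ : Fin n) (Pi.single j 1) :=
  dif_pos ⟨h1, h2⟩

/-- index maps for bonds -/
def ia (n : ℕ) (k : Fin (n - 1)) : Fin n := ⟨k.1, by have := k.2; omega⟩
def ib (n : ℕ) (k : Fin (n - 1)) : Fin n := ⟨k.1 + 1, by have := k.2; omega⟩

/-- the inverse-temperature profile -/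
def cc (T1 Tn : ℝ) (i k : ℕ) : ℝ := if k ≤ i then 1 / T1 else 1 / Tn

lemma sum_Icc_one (n : ℕ) (f : ℕ → ℝ) :
    ∑ k ∈ Finset.Icc 1 n, f k = ∑ k : Fin n, f (k.1 + 1) := by
  rw [← Finset.Ico_add_one_right_eq_Icc, Finset.sum_Ico_eq_sum_range]
  rw [Fin.sum_univ_eq_sum_range (fun k => f (k + 1))]
  simp [Nat.add_comm]

lemma sum_single_term {k' : Fin n} (F : Fin n → Vec d → ℝ) (hF0 : ∀ k, F k 0 = 0)
    (e : Vec d) : ∑ k, F k ((Pi.single k' e : Fin n → Vec d) k) = F k' e := by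
  rw [Fintype.sum_eq_single k' (fun k hk => by rw [Pi.single_eq_of_ne hk, hF0])]
  rw [Pi.single_eq_same]

end Coords
section VpotD

/-- coordinate projection on `(Fin n → Vec d)`. -/
def prjV {d n : ℕ} (k : Fin n) : (Fin n → Vec d) →L[ℝ] Vec d := ContinuousLinearMap.proj k

@[simp] lemma prjV_apply {d n : ℕ} (k : Fin n) (q : Fin n → Vec d) : prjV k q = q k := rfl

variable {d n : ℕ} (U1 U2 : Vec d → ℝ)

lemma Vpot_eq (q : Fin n → Vec d) :
    Vpot d n U1 U2 q = (∑ k : Fin n, U1 (q k))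
      + ∑ k : Fin (n - 1), U2 (q (ia n k) - q (ib n k)) := by
  unfold Vpot
  rw [sum_Icc_one, sum_Icc_one]
  congr 1
  · apply Finset.sum_congr rfl
    intro k _
    rw [nth_eq q _ (by omega) (by have := k.2; omega)]
    rfl
  · apply Finset.sum_congr rfl
    intro k _
    have hk := k.2
    rw [nth_eq q (k.1 + 1) (by omega) (by omega), nth_eq q (k.1 + 1 + 1) (by omega) (by omega)]
    rfl

/-- derivative of `Vpot` -/
def DV (q : Fin n → Vec d) : (Fin n → Vec d) →L[ℝ] ℝ :=
  (∑ k : Fin n, (fderiv ℝ U1 (q k)).comp (prjV k))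
  + ∑ k : Fin (n - 1), (fderiv ℝ U2 (q (ia n k) - q (ib n k))).comp
      (prjV (ia n k) - prjV (ib n k))

lemma hasFDerivAt_Vpot (hU1 : ContDiff ℝ (⊤ : ℕ∞) U1) (hU2 : ContDiff ℝ (⊤ : ℕ∞) U2)
    (q : Fin n → Vec d) :
    HasFDerivAt (Vpot d n U1 U2) (DV U1 U2 q) q := by
  have hV : Vpot d n U1 U2 = fun q : Fin n → Vec d => (∑ k : Fin n, U1 (q k))
      + ∑ k : Fin (n - 1), U2 (q (ia n k) - q (ib n k)) := funext (Vpot_eq U1 U2)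
  rw [hV]
  unfold DV
  apply HasFDerivAt.add
  · apply HasFDerivAt.fun_sum
    intro k _
    have h1 : HasFDerivAt U1 (fderiv ℝ U1 (q k)) (q k) :=
      (hU1.differentiable (by simp) (q k)).hasFDerivAt
    have h2 : HasFDerivAt (fun q : Fin n → Vec d => q k)
        (prjV k) q := (prjV k).hasFDerivAt
    exact h1.comp q h2
  · apply HasFDerivAt.fun_sum
    intro k _
    have h1 : HasFDerivAt U2 (fderiv ℝ U2 (q (ia n k) - q (ib n k)))
        (q (ia n k) - q (ib n k)) :=
      (hU2.differentiable (by simp) _).hasFDerivAt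
    have h2 : HasFDerivAt (fun q : Fin n → Vec d => q (ia n k) - q (ib n k))
        (prjV (ia n k) - prjV (ib n k)) q := (prjV (ia n k) - prjV (ib n k)).hasFDerivAt
    exact h1.comp q h2

end VpotD
section RfunEq
variable {d n : ℕ}

lemma step_split (i n : ℕ) (hi : i ≤ n) (c1 c2 : ℝ) (h : ℕ → ℝ) :
    c1 * (∑ k ∈ Finset.Icc 1 i, h k) + c2 * (∑ k ∈ Finset.Icc (i+1) n, h k)
      = ∑ k ∈ Finset.Icc 1 n, (if k ≤ i then c1 else c2) * h k := by
  have e1 : ∑ k ∈ Finset.Icc 1 i, h k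
      = ∑ k ∈ Finset.Icc 1 n, (if k ≤ i then h k else 0) := by
    rw [← Finset.sum_filter]
    congr 1
    ext k
    simp only [Finset.mem_filter, Finset.mem_Icc]
    omega
  have e2 : ∑ k ∈ Finset.Icc (i+1) n, h k
      = ∑ k ∈ Finset.Icc 1 n, (if ¬ k ≤ i then h k else 0) := by
    rw [← Finset.sum_filter]
    congr 1
    ext k
    simp only [Finset.mem_filter, Finset.mem_Icc]
    omega
  rw [e1, e2, Finset.mul_sum, Finset.mul_sum, ← Finset.sum_add_distrib]
  apply Finset.sum_congr rfl
  intro k _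
  by_cases hk : k ≤ i <;> simp [hk]

lemma step_shift (n : ℕ) (g : ℕ → ℝ) :
    ∑ k ∈ Finset.Icc 2 n, g k = ∑ k ∈ Finset.Icc 1 (n-1), g (k+1) := by
  rw [← Finset.Ico_add_one_right_eq_Icc, ← Finset.Ico_add_one_right_eq_Icc, Finset.sum_Ico_eq_sum_range,
    Finset.sum_Ico_eq_sum_range]
  have hr : n + 1 - 2 = n - 1 + 1 - 1 := by omega
  rw [hr]
  apply Finset.sum_congr rfl
  intro k _
  congr 1
  omega

lemma Rfun_eq (U1 U2 : Vec d → ℝ) (T1 Tn : ℝ) (i : ℕ) (hn : 2 ≤ n) (hi : i ≤ n)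
    (x : Phase d n) :
    Rfun d n U1 U2 T1 Tn i x =
      (1/T1) * sq2 x.2.2.1 + (1/Tn) * sq2 x.2.2.2
      + (∑ k : Fin n, cc T1 Tn i (k.1+1) * sq2 (x.1 k))
      + (∑ k : Fin n, cc T1 Tn i (k.1+1) * U1 (x.2.1 k))
      + ∑ k : Fin (n-1), ((cc T1 Tn i (k.1+1) + cc T1 Tn i (k.1+2))/2)
          * U2 (x.2.1 (ia n k) - x.2.1 (ib n k)) := by
  have key : (1/T1) * (∑ k ∈ Finset.Icc 1 i, locH d n U1 U2 k x)
      + (1/Tn) * (∑ k ∈ Finset.Icc (i+1) n, locH d n U1 U2 k x)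
      = ∑ k ∈ Finset.Icc 1 n, cc T1 Tn i k * locH d n U1 U2 k x := by
    rw [step_split i n hi]
    rfl
  have hR : Rfun d n U1 U2 T1 Tn i x
      = (1/T1) * sq2 x.2.2.1 + (1/Tn) * sq2 x.2.2.2
        + ∑ k ∈ Finset.Icc 1 n, cc T1 Tn i k * locH d n U1 U2 k x := by
    unfold Rfun
    rw [← key]
    unfold sq2
    ring
  rw [hR]
  have hexp : ∀ k, cc T1 Tn i k * locH d n U1 U2 k x
      = cc T1 Tn i k * sq2 (nth x.1 k)
        + cc T1 Tn i k * U1 (nth x.2.1 k)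
        + cc T1 Tn i k * (if 2 ≤ k then U2 (nth x.2.1 (k-1) - nth x.2.1 k) else 0) / 2
        + cc T1 Tn i k * (if k < n then U2 (nth x.2.1 k - nth x.2.1 (k+1)) else 0) / 2 := by
    intro k
    unfold locH sq2
    ring
  rw [Finset.sum_congr rfl (fun k _ => hexp k), Finset.sum_add_distrib,
    Finset.sum_add_distrib, Finset.sum_add_distrib]
  -- term 1
  have t1 : ∑ k ∈ Finset.Icc 1 n, cc T1 Tn i k * sq2 (nth x.1 k)
      = ∑ k : Fin n, cc T1 Tn i (k.1+1) * sq2 (x.1 k) := by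
    rw [sum_Icc_one]
    apply Finset.sum_congr rfl
    intro k _
    rw [nth_eq x.1 _ (by omega) (by have := k.2; omega)]
    rfl
  have t2 : ∑ k ∈ Finset.Icc 1 n, cc T1 Tn i k * U1 (nth x.2.1 k)
      = ∑ k : Fin n, cc T1 Tn i (k.1+1) * U1 (x.2.1 k) := by
    rw [sum_Icc_one]
    apply Finset.sum_congr rfl
    intro k _
    rw [nth_eq x.2.1 _ (by omega) (by have := k.2; omega)]
    rfl
  -- term 3
  have t3 : ∑ k ∈ Finset.Icc 1 n,
        cc T1 Tn i k * (if 2 ≤ k then U2 (nth x.2.1 (k-1) - nth x.2.1 k) else 0) / 2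
      = ∑ k ∈ Finset.Icc 1 (n-1),
          cc T1 Tn i (k+1) * U2 (nth x.2.1 k - nth x.2.1 (k+1)) / 2 := by
    rw [← Finset.sum_subset (Finset.Icc_subset_Icc (by omega) (le_refl n) :
        Finset.Icc 2 n ⊆ Finset.Icc 1 n)]
    · rw [Finset.sum_congr rfl (fun k hk => by
        rw [if_pos (Finset.mem_Icc.mp hk).1]),
        step_shift n (fun k => cc T1 Tn i k * U2 (nth x.2.1 (k-1) - nth x.2.1 k) / 2)]
      rfl
    · intro k hk hk2
      simp only [Finset.mem_Icc] at hk hk2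
      rw [if_neg (by omega)]
      ring
  -- term 4
  have t4 : ∑ k ∈ Finset.Icc 1 n,
        cc T1 Tn i k * (if k < n then U2 (nth x.2.1 k - nth x.2.1 (k+1)) else 0) / 2
      = ∑ k ∈ Finset.Icc 1 (n-1),
          cc T1 Tn i k * U2 (nth x.2.1 k - nth x.2.1 (k+1)) / 2 := by
    rw [← Finset.sum_subset (Finset.Icc_subset_Icc (le_refl 1) (by omega) :
        Finset.Icc 1 (n-1) ⊆ Finset.Icc 1 n)]
    · apply Finset.sum_congr rfl
      intro k hk
      rw [if_pos (by have := (Finset.mem_Icc.mp hk).2; omega)]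
    · intro k hk hk2
      simp only [Finset.mem_Icc] at hk hk2
      rw [if_neg (by omega)]
      ring
  -- combine bond terms
  have t34 : ∑ k ∈ Finset.Icc 1 (n-1),
        cc T1 Tn i (k+1) * U2 (nth x.2.1 k - nth x.2.1 (k+1)) / 2
      + ∑ k ∈ Finset.Icc 1 (n-1),
          cc T1 Tn i k * U2 (nth x.2.1 k - nth x.2.1 (k+1)) / 2
      = ∑ k : Fin (n-1), ((cc T1 Tn i (k.1+1) + cc T1 Tn i (k.1+2))/2)
          * U2 (x.2.1 (ia n k) - x.2.1 (ib n k)) := by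
    rw [← Finset.sum_add_distrib, sum_Icc_one]
    apply Finset.sum_congr rfl
    intro k _
    have hk := k.2
    rw [nth_eq x.2.1 (k.1+1) (by omega) (by omega),
      nth_eq x.2.1 (k.1+1+1) (by omega) (by omega)]
    have h1 : (⟨k.1+1-1, by omega⟩ : Fin n) = ia n k := rfl
    have h2 : (⟨k.1+1+1-1, by omega⟩ : Fin n) = ib n k := by
      apply Fin.ext
      simp [ib]
    rw [h1, h2]
    ring
  rw [t1, t2, t3, t4, ← t34]
  ring

end RfunEq
section DRsec
variable {d n : ℕ}

/-- derivative of `Rfun` -/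
def DR (U1 U2 : Vec d → ℝ) (T1 Tn : ℝ) (i : ℕ) (x : Phase d n) : Phase d n →L[ℝ] ℝ :=
  (1/T1) • ((gradSq x.2.2.1).comp (Ta d n)) + (1/Tn) • ((gradSq x.2.2.2).comp (Tb d n))
  + ∑ k : Fin n, cc T1 Tn i (k.1+1) • ((gradSq (x.1 k)).comp (Tp k))
  + ∑ k : Fin n, cc T1 Tn i (k.1+1) • ((fderiv ℝ U1 (x.2.1 k)).comp (Tq k))
  + ∑ k : Fin (n-1), ((cc T1 Tn i (k.1+1) + cc T1 Tn i (k.1+2))/2) •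
      ((fderiv ℝ U2 (x.2.1 (ia n k) - x.2.1 (ib n k))).comp (Tq (ia n k) - Tq (ib n k)))

lemma hasFDerivAt_Rfun (U1 U2 : Vec d → ℝ)
    (hU1 : ContDiff ℝ (⊤ : ℕ∞) U1) (hU2 : ContDiff ℝ (⊤ : ℕ∞) U2)
    (T1 Tn : ℝ) (i : ℕ) (hn : 2 ≤ n) (hi : i ≤ n) (x : Phase d n) :
    HasFDerivAt (Rfun d n U1 U2 T1 Tn i) (DR U1 U2 T1 Tn i x) x := by
  have hre : Rfun d n U1 U2 T1 Tn i = fun y : Phase d n =>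
      (1/T1) * sq2 y.2.2.1 + (1/Tn) * sq2 y.2.2.2
      + (∑ k : Fin n, cc T1 Tn i (k.1+1) * sq2 (y.1 k))
      + (∑ k : Fin n, cc T1 Tn i (k.1+1) * U1 (y.2.1 k))
      + ∑ k : Fin (n-1), ((cc T1 Tn i (k.1+1) + cc T1 Tn i (k.1+2))/2)
          * U2 (y.2.1 (ia n k) - y.2.1 (ib n k)) :=
    funext (Rfun_eq U1 U2 T1 Tn i hn hi)
  rw [hre]
  unfold DR
  apply HasFDerivAt.add
  apply HasFDerivAt.add
  apply HasFDerivAt.add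
  apply HasFDerivAt.add
  · exact ((hasFDerivAt_sq2 x.2.2.1).comp x (Ta d n).hasFDerivAt).const_mul (1/T1)
  · exact ((hasFDerivAt_sq2 x.2.2.2).comp x (Tb d n).hasFDerivAt).const_mul (1/Tn)
  · exact HasFDerivAt.fun_sum fun k _ =>
      ((hasFDerivAt_sq2 (x.1 k)).comp x (Tp k).hasFDerivAt).const_mul _
  · exact HasFDerivAt.fun_sum fun k _ =>
      (((hU1.differentiable (by simp) _).hasFDerivAt).comp x
        (Tq k).hasFDerivAt).const_mul _
  · exact HasFDerivAt.fun_sum fun k _ =>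
      (((hU2.differentiable (by simp) _).hasFDerivAt).comp x
        (Tq (ia n k) - Tq (ib n k)).hasFDerivAt).const_mul _

variable (U1 U2 : Vec d → ℝ) (T1 Tn : ℝ) (i : ℕ)

lemma DR_apply_eR1 (x : Phase d n) (j : Fin d) :
    DR U1 U2 T1 Tn i x (eR1 d n j) = (1/T1) * x.2.2.1 j := by
  unfold DR eR1
  simp [ContinuousLinearMap.sum_apply, Tp, Tq, Ta, Tb, gradSq_apply, dotp_single, dotp_zero_right]

lemma DR_apply_eRn (x : Phase d n) (j : Fin d) :
    DR U1 U2 T1 Tn i x (eRn d n j) = (1/Tn) * x.2.2.2 j := by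
  unfold DR eRn
  simp [ContinuousLinearMap.sum_apply, Tp, Tq, Ta, Tb, gradSq_apply, dotp_single, dotp_zero_right]

lemma DR_apply_eP (m : ℕ) (h1 : 1 ≤ m) (h2 : m ≤ n) (x : Phase d n) (j : Fin d) :
    DR U1 U2 T1 Tn i x (eP d n m j)
      = cc T1 Tn i m * x.1 ⟨m-1, by omega⟩ j := by
  unfold DR eP
  rw [basisQ_eval m j h1 h2]
  simp only [ContinuousLinearMap.add_apply, ContinuousLinearMap.smul_apply,
    ContinuousLinearMap.coe_comp', Function.comp_apply, ContinuousLinearMap.sum_apply,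
    ContinuousLinearMap.coe_sub', Pi.sub_apply, Tp_apply, Tq_apply, Ta_apply, Tb_apply,
    smul_eq_mul]
  rw [sum_single_term (fun k w => cc T1 Tn i (k.1+1) * gradSq (x.1 k) w)
    (fun k => by simp) (Pi.single j 1)]
  have hm : m - 1 + 1 = m := by omega
  simp only [gradSq_apply, Pi.zero_apply, map_zero, sub_zero, dotp_zero_right, dotp_single, mul_zero,
    add_zero, zero_add, Finset.sum_const_zero, hm]

lemma DR_apply_eQ (m : ℕ) (h1 : 1 ≤ m) (h2 : m ≤ n) (x : Phase d n) (j : Fin d) :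
    DR U1 U2 T1 Tn i x (eQ d n m j)
      = cc T1 Tn i m * fderiv ℝ U1 (x.2.1 ⟨m-1, by omega⟩) (Pi.single j 1)
        + ∑ k : Fin (n-1), ((cc T1 Tn i (k.1+1) + cc T1 Tn i (k.1+2))/2) *
            fderiv ℝ U2 (x.2.1 (ia n k) - x.2.1 (ib n k))
              ((Pi.single (⟨m-1, by omega⟩ : Fin n) (Pi.single j 1) : Fin n → Vec d) (ia n k)
               - (Pi.single (⟨m-1, by omega⟩ : Fin n) (Pi.single j 1) : Fin n → Vec d) (ib n k)) := by
  unfold DR eQ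
  rw [basisQ_eval m j h1 h2]
  simp only [ContinuousLinearMap.add_apply, ContinuousLinearMap.smul_apply,
    ContinuousLinearMap.coe_comp', Function.comp_apply, ContinuousLinearMap.sum_apply,
    ContinuousLinearMap.coe_sub', Pi.sub_apply, Tp_apply, Tq_apply, Ta_apply, Tb_apply,
    smul_eq_mul]
  rw [sum_single_term (fun k w => cc T1 Tn i (k.1+1) * fderiv ℝ U1 (x.2.1 k) w)
    (fun k => by simp) (Pi.single j 1)]
  have hm : m - 1 + 1 = m := by omega
  simp only [gradSq_apply, Pi.zero_apply, map_zero, sub_zero, dotp_zero_right, mul_zero,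
    add_zero, zero_add, Finset.sum_const_zero, hm]

lemma DV_apply (m : ℕ) (h1 : 1 ≤ m) (h2 : m ≤ n) (q : Fin n → Vec d) (j : Fin d) :
    DV U1 U2 q (basisQ d n m j)
      = fderiv ℝ U1 (q ⟨m-1, by omega⟩) (Pi.single j 1)
        + ∑ k : Fin (n-1), fderiv ℝ U2 (q (ia n k) - q (ib n k))
            ((Pi.single (⟨m-1, by omega⟩ : Fin n) (Pi.single j 1) : Fin n → Vec d) (ia n k)
             - (Pi.single (⟨m-1, by omega⟩ : Fin n) (Pi.single j 1) : Fin n → Vec d) (ib n k)) := by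
  unfold DV
  rw [basisQ_eval m j h1 h2]
  simp only [ContinuousLinearMap.add_apply, ContinuousLinearMap.coe_comp', Function.comp_apply,
    ContinuousLinearMap.sum_apply, ContinuousLinearMap.coe_sub', Pi.sub_apply, prjV_apply]
  rw [sum_single_term (fun k w => fderiv ℝ U1 (q k) w) (fun k => by simp) (Pi.single j 1)]

end DRsec
section Helpers
variable {d n : ℕ}

lemma dotp_comm (a b : Vec d) : dotp a b = dotp b a := by
  unfold dotp; apply Finset.sum_congr rfl; intros; ring

lemma mul_dot (c : ℝ) (v w : Vec d) : ∑ j, v j * (c * w j) = c * dotp v w := by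
  unfold dotp; rw [Finset.mul_sum]; apply Finset.sum_congr rfl; intros; ring

lemma alg1 {γ : Type*} (s : Finset γ) (p c A : ℝ) (w X : γ → ℝ) :
    p * (c * A + ∑ k ∈ s, w k * X k) - (A + ∑ k ∈ s, X k) * (c * p)
      = ∑ k ∈ s, (w k - c) * p * X k := by
  rw [mul_add, add_mul, Finset.mul_sum, Finset.sum_mul]
  have hs : ∑ k ∈ s, (p * (w k * X k) - X k * (c * p)) = ∑ k ∈ s, (w k - c) * p * X k :=
    Finset.sum_congr rfl (fun k _ => by ring)
  rw [Finset.sum_sub_distrib] at hs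
  have h0 : p * (c * A) = A * (c * p) := by ring
  linarith

lemma pick (f : Fin n → ℝ) (A : ℝ) (k1 k2 : Fin n) :
    ∑ k : Fin n, f k * ((if k1 = k then A else 0) - (if k2 = k then A else 0))
      = f k1 * A - f k2 * A := by
  simp [mul_sub, Finset.sum_sub_distrib, mul_ite, mul_zero, Finset.sum_ite_eq]

lemma cc_diff (T1 Tn : ℝ) (i k : ℕ) :
    cc T1 Tn i (k+2) - cc T1 Tn i (k+1) = if k+1 = i then 1/Tn - 1/T1 else 0 := by
  unfold cc
  split_ifs
  all_goals try (exfalso; omega)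
  all_goals ring

lemma sum_const_fin (c : ℝ) : ∑ _j : Fin d, c = (d : ℝ) * c := by
  simp [Finset.sum_const, Finset.card_univ, nsmul_eq_mul]

end Helpers
section HamCore
variable {d n : ℕ}

@[simp] lemma ia_val (k : Fin (n-1)) : (ia n k).1 = k.1 := rfl
@[simp] lemma ib_val (k : Fin (n-1)) : (ib n k).1 = k.1 + 1 := rfl

lemma nth_eq' (v : Fin n → Vec d) (k : ℕ) (h1 : 1 ≤ k) (h2 : k ≤ n) (kk : Fin n)
    (hkk : kk.1 = k - 1) : nth v k = v kk := by
  rw [nth_eq v k h1 h2]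
  have h : kk = ⟨k - 1, by omega⟩ := Fin.ext hkk
  rw [h]

lemma ham_core (hn : 2 ≤ n) (c : ℕ → ℝ) (P : Fin n → Vec d) (A1 : Fin n → Fin d → ℝ)
    (A2 : Fin (n-1) → (Vec d →L[ℝ] ℝ)) :
    (∑ k : Fin n, ∑ j : Fin d, P k j * (c (k.1+1) * A1 k j
        + ∑ k' : Fin (n-1), ((c (k'.1+1) + c (k'.1+2))/2)
            * A2 k' ((Pi.single k (Pi.single j 1) : Fin n → Vec d) (ia n k')
                     - (Pi.single k (Pi.single j 1) : Fin n → Vec d) (ib n k'))))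
    - (∑ k : Fin n, ∑ j : Fin d, (A1 k j
        + ∑ k' : Fin (n-1), A2 k' ((Pi.single k (Pi.single j 1) : Fin n → Vec d) (ia n k')
                     - (Pi.single k (Pi.single j 1) : Fin n → Vec d) (ib n k')))
          * (c (k.1+1) * P k j))
    = ∑ k' : Fin (n-1), (c (k'.1+2) - c (k'.1+1))
        * ∑ j : Fin d, ((P (ia n k') j + P (ib n k') j)/2) * A2 k' (Pi.single j 1) := by
  rw [← Finset.sum_sub_distrib]
  have h1 : ∀ k : Fin n,
      (∑ j : Fin d, P k j * (c (k.1+1) * A1 k j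
        + ∑ k' : Fin (n-1), ((c (k'.1+1) + c (k'.1+2))/2)
            * A2 k' ((Pi.single k (Pi.single j 1) : Fin n → Vec d) (ia n k')
                     - (Pi.single k (Pi.single j 1) : Fin n → Vec d) (ib n k'))))
      - (∑ j : Fin d, (A1 k j
        + ∑ k' : Fin (n-1), A2 k' ((Pi.single k (Pi.single j 1) : Fin n → Vec d) (ia n k')
                     - (Pi.single k (Pi.single j 1) : Fin n → Vec d) (ib n k')))
          * (c (k.1+1) * P k j))
      = ∑ j : Fin d, ∑ k' : Fin (n-1),
          (((c (k'.1+1) + c (k'.1+2))/2) - c (k.1+1)) * P k j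
            * A2 k' ((Pi.single k (Pi.single j 1) : Fin n → Vec d) (ia n k')
                     - (Pi.single k (Pi.single j 1) : Fin n → Vec d) (ib n k')) := by
    intro k
    rw [← Finset.sum_sub_distrib]
    apply Finset.sum_congr rfl
    intro j _
    exact alg1 _ _ _ _ _ _
  rw [Finset.sum_congr rfl (fun k _ => h1 k)]
  rw [Finset.sum_congr rfl (fun k (_ : k ∈ Finset.univ) =>
    (Finset.sum_comm : (∑ j : Fin d, ∑ k' : Fin (n-1), _) = _))]
  rw [Finset.sum_comm]
  apply Finset.sum_congr rfl
  intro k' _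
  rw [Finset.sum_comm, Finset.mul_sum]
  apply Finset.sum_congr rfl
  intro j _
  have hX : ∀ k : Fin n,
      A2 k' ((Pi.single k (Pi.single j 1) : Fin n → Vec d) (ia n k')
             - (Pi.single k (Pi.single j 1) : Fin n → Vec d) (ib n k'))
      = (if ia n k' = k then A2 k' (Pi.single j 1) else 0)
        - (if ib n k' = k then A2 k' (Pi.single j 1) else 0) := by
    intro k
    rw [map_sub, Pi.single_apply, Pi.single_apply, apply_ite (A2 k'), apply_ite (A2 k'),
      map_zero]
  rw [Finset.sum_congr rfl (fun k (_ : k ∈ Finset.univ) => by rw [hX k])]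
  rw [pick (fun k => (((c (k'.1+1) + c (k'.1+2))/2) - c (k.1+1)) * P k j) (A2 k' (Pi.single j 1))
    (ia n k') (ib n k')]
  simp only [ia_val, ib_val]
  have h2 : k'.1 + 1 + 1 = k'.1 + 2 := rfl
  rw [h2]
  ring

end HamCore
/-- For every `0 ≤ i ≤ n`,
`σ_i = γ(|r₁|²/T₁ + |rₙ|²/Tₙ - 2d) + L R_i`. -/
theorem sigma_eq_quadratic_add_gen_R
    (d n : ℕ) (hd : 1 ≤ d) (hn : 2 ≤ n)
    (U1 U2 : Vec d → ℝ) (hU1 : ContDiff ℝ (⊤ : ℕ∞) U1) (hU2 : ContDiff ℝ (⊤ : ℕ∞) U2)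
    (ga lam T1 Tn : ℝ) (hga : 0 < ga) (hT1 : 0 < T1) (hTn : 0 < Tn)
    (i : ℕ) (hi : i ≤ n) :
    ∀ x : Phase d n,
      sigmaF d n U2 lam T1 Tn i x
        = ga * (dotp x.2.2.1 x.2.2.1 / T1 + dotp x.2.2.2 x.2.2.2 / Tn - 2 * (d : ℝ))
          + gen d n U1 U2 ga lam T1 Tn (Rfun d n U1 U2 T1 Tn i) x := by
  intro x
  have hT1' : T1 ≠ 0 := ne_of_gt hT1
  have hTn' : Tn ≠ 0 := ne_of_gt hTn
  have h0n : 0 < n := by omega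
  have hn1 : n - 1 < n := by omega
  set F := Rfun d n U1 U2 T1 Tn i with hF
  set i0 : Fin n := ⟨0, h0n⟩ with hi0def
  set iN : Fin n := ⟨n-1, hn1⟩ with hiNdef
  have hDf : ∀ y : Phase d n, fderiv ℝ F y = DR U1 U2 T1 Tn i y :=
    fun y => (hasFDerivAt_Rfun U1 U2 hU1 hU2 T1 Tn i hn hi y).fderiv
  have hpdR1 : ∀ (y : Phase d n) (j : Fin d), pd F (eR1 d n j) y = (1/T1) * y.2.2.1 j :=
    fun y j => by unfold pd; rw [hDf, DR_apply_eR1]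
  have hpdRn : ∀ (y : Phase d n) (j : Fin d), pd F (eRn d n j) y = (1/Tn) * y.2.2.2 j :=
    fun y j => by unfold pd; rw [hDf, DR_apply_eRn]
  have hpdP : ∀ (m : ℕ) (h1 : 1 ≤ m) (h2 : m ≤ n) (j : Fin d),
      pd F (eP d n m j) x = cc T1 Tn i m * x.1 ⟨m-1, by omega⟩ j :=
    fun m h1 h2 j => by unfold pd; rw [hDf]; exact DR_apply_eP U1 U2 T1 Tn i m h1 h2 x j
  have hpdQ : ∀ (m : ℕ) (h1 : 1 ≤ m) (h2 : m ≤ n) (j : Fin d),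
      pd F (eQ d n m j) x
        = cc T1 Tn i m * fderiv ℝ U1 (x.2.1 ⟨m-1, by omega⟩) (Pi.single j 1)
          + ∑ k' : Fin (n-1), ((cc T1 Tn i (k'.1+1) + cc T1 Tn i (k'.1+2))/2) *
              fderiv ℝ U2 (x.2.1 (ia n k') - x.2.1 (ib n k'))
                ((Pi.single (⟨m-1, by omega⟩ : Fin n) (Pi.single j 1) : Fin n → Vec d) (ia n k')
                 - (Pi.single (⟨m-1, by omega⟩ : Fin n) (Pi.single j 1) : Fin n → Vec d) (ib n k')) :=
    fun m h1 h2 j => by unfold pd; rw [hDf]; exact DR_apply_eQ U1 U2 T1 Tn i m h1 h2 x j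
  have hpd2R1 : ∀ j : Fin d, pd2 F (eR1 d n j) x = 1/T1 := by
    intro j
    unfold pd2
    have h1 : (fun y : Phase d n => fderiv ℝ F y (eR1 d n j))
        = fun y : Phase d n => (1/T1) * y.2.2.1 j :=
      funext fun y => by rw [hDf, DR_apply_eR1]
    rw [h1]
    have h2 : HasFDerivAt (fun y : Phase d n => (1/T1) * y.2.2.1 j)
        ((1/T1) • ((prj j).comp (Ta d n))) x :=
      ((prj j).comp (Ta d n)).hasFDerivAt.const_mul (1/T1)
    rw [h2.fderiv]
    simp [prj, eR1, Ta]
  have hpd2Rn : ∀ j : Fin d, pd2 F (eRn d n j) x = 1/Tn := by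
    intro j
    unfold pd2
    have h1 : (fun y : Phase d n => fderiv ℝ F y (eRn d n j))
        = fun y : Phase d n => (1/Tn) * y.2.2.2 j :=
      funext fun y => by rw [hDf, DR_apply_eRn]
    rw [h1]
    have h2 : HasFDerivAt (fun y : Phase d n => (1/Tn) * y.2.2.2 j)
        ((1/Tn) • ((prj j).comp (Tb d n))) x :=
      ((prj j).comp (Tb d n)).hasFDerivAt.const_mul (1/Tn)
    rw [h2.fderiv]
    simp [prj, eRn, Tb]
  have hfV : ∀ (m : ℕ) (h1 : 1 ≤ m) (h2 : m ≤ n) (j : Fin d),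
      fderiv ℝ (Vpot d n U1 U2) x.2.1 (basisQ d n m j)
        = fderiv ℝ U1 (x.2.1 ⟨m-1, by omega⟩) (Pi.single j 1)
          + ∑ k' : Fin (n-1), fderiv ℝ U2 (x.2.1 (ia n k') - x.2.1 (ib n k'))
              ((Pi.single (⟨m-1, by omega⟩ : Fin n) (Pi.single j 1) : Fin n → Vec d) (ia n k')
               - (Pi.single (⟨m-1, by omega⟩ : Fin n) (Pi.single j 1) : Fin n → Vec d) (ib n k')) :=
    fun m h1 h2 j => by
      rw [(hasFDerivAt_Vpot U1 U2 hU1 hU2 x.2.1).fderiv]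
      exact DV_apply U1 U2 m h1 h2 x.2.1 j
  -- gen0 part
  have hgen0 : gen0 d n ga T1 Tn F x
      = ga * (2*(d:ℝ) - dotp x.2.2.1 x.2.2.1 / T1 - dotp x.2.2.2 x.2.2.2 / Tn) := by
    unfold gen0
    simp only [hpd2R1, hpd2Rn, hpdR1, hpdRn]
    rw [sum_const_fin (1/T1), sum_const_fin (1/Tn), mul_dot (1/T1) x.2.2.1 x.2.2.1,
      mul_dot (1/Tn) x.2.2.2 x.2.2.2]
    have e1 : T1 * ((d:ℝ) * (1/T1)) = (d:ℝ) := by field_simp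
    have e2 : Tn * ((d:ℝ) * (1/Tn)) = (d:ℝ) := by field_simp
    rw [e1, e2]
    ring
  -- gen1 part
  have hgen1 : gen1 d n U1 U2 lam F x
      = lam * ((1/T1) * dotp (x.1 i0) x.2.2.1
             + (1/Tn) * dotp (x.1 iN) x.2.2.2
             - cc T1 Tn i 1 * dotp x.2.2.1 (x.1 i0)
             - cc T1 Tn i n * dotp x.2.2.2 (x.1 iN))
        + ∑ k' : Fin (n-1), (cc T1 Tn i (k'.1+2) - cc T1 Tn i (k'.1+1))
            * ∑ j, ((x.1 (ia n k') j + x.1 (ib n k') j)/2)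
                * fderiv ℝ U2 (x.2.1 (ia n k') - x.2.1 (ib n k')) (Pi.single j 1) := by
    unfold gen1
    have l1 : ∑ j, nth x.1 1 j * pd F (eR1 d n j) x
        = (1/T1) * dotp (x.1 i0) x.2.2.1 := by
      rw [nth_eq' x.1 1 le_rfl (by omega) i0 rfl]
      simp only [hpdR1]
      exact mul_dot _ _ _
    have l2 : ∑ j, nth x.1 n j * pd F (eRn d n j) x
        = (1/Tn) * dotp (x.1 iN) x.2.2.2 := by
      rw [nth_eq' x.1 n (by omega) le_rfl iN rfl]
      simp only [hpdRn]
      exact mul_dot _ _ _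
    have l3 : ∑ j, x.2.2.1 j * pd F (eP d n 1 j) x
        = cc T1 Tn i 1 * dotp x.2.2.1 (x.1 i0) := by
      simp only [hpdP 1 le_rfl (by omega)]
      exact mul_dot _ _ _
    have l4 : ∑ j, x.2.2.2 j * pd F (eP d n n j) x
        = cc T1 Tn i n * dotp x.2.2.2 (x.1 iN) := by
      simp only [hpdP n (by omega) le_rfl]
      exact mul_dot _ _ _
    have hSQ : (∑ m ∈ Finset.Icc 1 n, ∑ j, nth x.1 m j * pd F (eQ d n m j) x)
        = ∑ k : Fin n, ∑ j, x.1 k j *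
            (cc T1 Tn i (k.1+1) * fderiv ℝ U1 (x.2.1 k) (Pi.single j 1)
             + ∑ k' : Fin (n-1), ((cc T1 Tn i (k'.1+1) + cc T1 Tn i (k'.1+2))/2)
                 * fderiv ℝ U2 (x.2.1 (ia n k') - x.2.1 (ib n k'))
                     ((Pi.single k (Pi.single j 1) : Fin n → Vec d) (ia n k')
                      - (Pi.single k (Pi.single j 1) : Fin n → Vec d) (ib n k'))) := by
      rw [sum_Icc_one n (fun m => ∑ j, nth x.1 m j * pd F (eQ d n m j) x)]
      apply Finset.sum_congr rfl
      intro k _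
      have hk2 := k.2
      rw [nth_eq' x.1 (k.1+1) (by omega) (by omega) k (by omega)]
      apply Finset.sum_congr rfl
      intro j _
      rw [hpdQ (k.1+1) (by omega) (by omega) j]
      rfl
    have hSV : (∑ m ∈ Finset.Icc 1 n, ∑ j,
          fderiv ℝ (Vpot d n U1 U2) x.2.1 (basisQ d n m j) * pd F (eP d n m j) x)
        = ∑ k : Fin n, ∑ j,
            (fderiv ℝ U1 (x.2.1 k) (Pi.single j 1)
             + ∑ k' : Fin (n-1), fderiv ℝ U2 (x.2.1 (ia n k') - x.2.1 (ib n k'))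
                 ((Pi.single k (Pi.single j 1) : Fin n → Vec d) (ia n k')
                  - (Pi.single k (Pi.single j 1) : Fin n → Vec d) (ib n k')))
            * (cc T1 Tn i (k.1+1) * x.1 k j) := by
      rw [sum_Icc_one n (fun m => ∑ j,
        fderiv ℝ (Vpot d n U1 U2) x.2.1 (basisQ d n m j) * pd F (eP d n m j) x)]
      apply Finset.sum_congr rfl
      intro k _
      have hk2 := k.2
      apply Finset.sum_congr rfl
      intro j _
      rw [hfV (k.1+1) (by omega) (by omega) j, hpdP (k.1+1) (by omega) (by omega) j]
      rfl
    rw [l1, l2, l3, l4, hSQ, hSV]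
    congr 1
    exact ham_core hn (cc T1 Tn i) x.1
      (fun k j => fderiv ℝ U1 (x.2.1 k) (Pi.single j 1))
      (fun k' => fderiv ℝ U2 (x.2.1 (ia n k') - x.2.1 (ib n k')))
  -- assemble
  unfold gen
  rw [hgen0, hgen1]
  unfold sigmaF
  rcases Nat.eq_zero_or_pos i with hiz | hip
  · -- i = 0
    subst hiz
    unfold flow
    rw [if_pos rfl, nth_eq' x.1 1 le_rfl (by omega) i0 rfl]
    have hc1 : cc T1 Tn 0 1 = 1/Tn := if_neg (by omega)
    have hcn : cc T1 Tn 0 n = 1/Tn := if_neg (by omega)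
    have hham : (∑ k' : Fin (n-1), (cc T1 Tn 0 (k'.1+2) - cc T1 Tn 0 (k'.1+1))
            * ∑ j, ((x.1 (ia n k') j + x.1 (ib n k') j)/2)
                * fderiv ℝ U2 (x.2.1 (ia n k') - x.2.1 (ib n k')) (Pi.single j 1)) = 0 :=
      Finset.sum_eq_zero fun k' _ => by
        rw [cc_diff, if_neg (by omega), zero_mul]
    rw [hc1, hcn, hham, dotp_comm x.2.2.1 (x.1 i0), dotp_comm x.2.2.2 (x.1 iN)]
    ring
  · by_cases hin : i = n
    · -- i = n
      unfold flow
      rw [if_neg (by omega), if_pos hin, nth_eq' x.1 n (by omega) le_rfl iN rfl]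
      have hc1 : cc T1 Tn i 1 = 1/T1 := if_pos (by omega)
      have hcn : cc T1 Tn i n = 1/T1 := if_pos (by omega)
      have hham : (∑ k' : Fin (n-1), (cc T1 Tn i (k'.1+2) - cc T1 Tn i (k'.1+1))
              * ∑ j, ((x.1 (ia n k') j + x.1 (ib n k') j)/2)
                  * fderiv ℝ U2 (x.2.1 (ia n k') - x.2.1 (ib n k')) (Pi.single j 1)) = 0 :=
        Finset.sum_eq_zero fun k' _ => by
          rw [cc_diff, if_neg (by have := k'.2; omega), zero_mul]
      rw [hc1, hcn, hham, dotp_comm x.2.2.1 (x.1 i0), dotp_comm x.2.2.2 (x.1 iN)]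
      ring
    · -- 1 ≤ i ≤ n-1
      have hi1 : 1 ≤ i := hip
      have hin1 : i ≤ n - 1 := by omega
      set k0 : Fin (n-1) := ⟨i-1, by omega⟩ with hk0def
      unfold flow
      rw [if_neg (by omega), if_neg hin]
      rw [nth_eq' x.1 i hi1 (by omega) (ia n k0) (by simp [hk0def]),
        nth_eq' x.1 (i+1) (by omega) (by omega) (ib n k0) (by simp [hk0def]; omega),
        nth_eq' x.2.1 i hi1 (by omega) (ia n k0) (by simp [hk0def]),
        nth_eq' x.2.1 (i+1) (by omega) (by omega) (ib n k0) (by simp [hk0def]; omega)]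
      have hc1 : cc T1 Tn i 1 = 1/T1 := if_pos hi1
      have hcn : cc T1 Tn i n = 1/Tn := if_neg (by omega)
      have hham : (∑ k' : Fin (n-1), (cc T1 Tn i (k'.1+2) - cc T1 Tn i (k'.1+1))
              * ∑ j, ((x.1 (ia n k') j + x.1 (ib n k') j)/2)
                  * fderiv ℝ U2 (x.2.1 (ia n k') - x.2.1 (ib n k')) (Pi.single j 1))
          = (1/Tn - 1/T1) * ∑ j, ((x.1 (ia n k0) j + x.1 (ib n k0) j)/2)
                  * fderiv ℝ U2 (x.2.1 (ia n k0) - x.2.1 (ib n k0)) (Pi.single j 1) := by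
        rw [Finset.sum_eq_single k0]
        · rw [cc_diff, if_pos (by simp [hk0def]; omega)]
        · intro k' _ hne
          rw [cc_diff, if_neg (fun h => hne (Fin.ext (by simp [hk0def]; omega))), zero_mul]
        · intro h
          exact absurd (Finset.mem_univ k0) h
      rw [hc1, hcn, hham, dotp_comm x.2.2.1 (x.1 i0), dotp_comm x.2.2.2 (x.1 iN)]
      ring
end EP
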